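/- arXiv:1508.05465 — 8 statements merged into one kernel-verified Lean document; each statement's English description precedes it below -/
import Mathlib

section
/- For a union-closed family K of subsets of a finite set Q containing the empty set, the family Ǩ consisting of all members K of K such that there exists a tight path from ∅ to K in K is itself union-closed. -/
variable {α : Type*} [DecidableEq α] [Fintype α]

/-- A family of subsets is union-closed. -/
def UnionClosed (K : Set (Finset α)) : Prop :=
  ∀ X ∈ K, ∀ Y ∈ K, X ∪ Y ∈ K

/-- There is a tight path in `K` from `S` to `T`: a chain of members of `K`
each obtained from the previous by adding exactly one element. -/
def TightPath (K : Set (Finset α)) (S T : Finset α) : Prop :=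
  ∃ (k : ℕ) (Y : ℕ → Finset α), Y 0 = S ∧ Y k = T ∧ (∀ i ≤ k, Y i ∈ K) ∧
    ∀ i < k, Y i ⊆ Y (i + 1) ∧ (Y (i + 1) \ Y i).card = 1

/-- The family of members of `K` reachable from `∅` by a tight path in `K`. -/
def checkFam (K : Set (Finset α)) : Set (Finset α) :=
  {X | X ∈ K ∧ TightPath K ∅ X}

/-- Accessibility: every nonempty member can lose some element and stay in the family. -/
def Accessible (K : Set (Finset α)) : Prop :=
  ∀ X ∈ K, X ≠ ∅ → ∃ x ∈ X, X.erase x ∈ K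

/-- An antimatroid: contains `∅`, union-closed, and accessible. -/
def IsAntimatroid (K : Set (Finset α)) : Prop :=
  ∅ ∈ K ∧ UnionClosed K ∧ Accessible K


/-!
If `∅ = Y₀ ⋖ ⋯ ⋖ Yₖ = Y` is a tight path in `K` and `X ∈ Ǩ`, then `X ∪ Y₀ ⊆ ⋯ ⊆ X ∪ Yₖ` stays in
`K` by union-closedness and each step adds at most one element. Dropping repetitions and
prepending a tight path from `∅` to `X = X ∪ Y₀` yields a tight path from `∅` to `X ∪ Y`.
-/

open Finset Relation

section

omit [Fintype α]

def TightStep (K : Set (Finset α)) (U T : Finset α) : Prop :=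
  U ⋖ T ∧ T ∈ K

variable {K : Set (Finset α)}

theorem TightPath.snoc {S U T : Finset α} (hSU : TightPath K S U)
    (hUT : TightStep K U T) : TightPath K S T := by
  obtain ⟨k, Y, hY0, rfl, hmem, hstep⟩ := hSU
  obtain ⟨hcov, hT⟩ := hUT
  refine ⟨k + 1, fun i => if i ≤ k then Y i else T, by simpa using hY0, by simp, ?_, ?_⟩
  · intro i hi
    dsimp only
    split_ifs with h
    exacts [hmem i h, hT]
  · intro i hi
    rcases Nat.lt_succ_iff_lt_or_eq.1 hi with hi | rfl
    · simpa [hi.le, Nat.succ_le_of_lt hi] using hstep i hi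
    · simpa using covBy_iff_card_sdiff_eq_one.1 hcov

theorem tightPath_iff_reflTransGen {S T : Finset α} :
    TightPath K S T ↔ S ∈ K ∧ ReflTransGen (TightStep K) S T := by
  constructor
  · rintro ⟨k, Y, rfl, rfl, hmem, hstep⟩
    refine ⟨hmem 0 k.zero_le, ?_⟩
    induction k with
    | zero => rfl
    | succ k ih =>
      refine (ih (fun i hi => hmem i (by omega)) (fun i hi => hstep i (by omega))).tail ?_
      exact ⟨covBy_iff_card_sdiff_eq_one.2 (hstep k k.lt_succ_self), hmem (k + 1) le_rfl⟩
  · rintro ⟨hS, hST⟩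
    induction hST with
    | refl => exact ⟨0, fun _ => S, rfl, rfl, by simpa using hS, by simp⟩
    | tail _ hUT ih => exact ih.snoc hUT

theorem CovBy.union_left_wcovBy {U T : Finset α} (h : U ⋖ T) (X : Finset α) :
    X ∪ U ⩿ X ∪ T := by
  obtain ⟨a, -, rfl⟩ := h.exists_finset_insert
  rw [union_insert]
  exact wcovBy_insert _ _

theorem reflTransGen_tightStep_union_left (hU : UnionClosed K)
    {X S T : Finset α} (hX : X ∈ K) (hST : ReflTransGen (TightStep K) S T) :
    ReflTransGen (TightStep K) (X ∪ S) (X ∪ T) := by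
  refine hST.lift' (X ∪ ·) fun U T ⟨hcov, hT⟩ => ?_
  rcases (hcov.union_left_wcovBy X).eq_or_covBy with heq | hcov'
  · show ReflTransGen _ (X ∪ U) (X ∪ T)
    rw [heq]
  · exact ReflTransGen.single ⟨hcov', hU X hX T hT⟩

end

theorem stmt0_general (K : Set (Finset α)) (hU : UnionClosed K) :
    UnionClosed (checkFam K) := by
  rintro X ⟨hXK, hX⟩ Y ⟨hYK, hY⟩
  rw [tightPath_iff_reflTransGen] at hX hY
  refine ⟨hU X hXK Y hYK, tightPath_iff_reflTransGen.2 ⟨hX.1, hX.2.trans ?_⟩⟩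
  simpa using reflTransGen_tightStep_union_left hU hXK hY.2

theorem stmt0 (K : Set (Finset α)) (hempty : ∅ ∈ K) (hU : UnionClosed K) :
    UnionClosed (checkFam K) :=
  stmt0_general K hU
end

section
/- For a union-closed family K of subsets of a finite set Q containing ∅, the family Ǩ of members of K reachable from ∅ by a tight path in K is the unique maximal antimatroid contained in K: Ǩ is an antimatroid, and every antimatroid L with L ⊆ K satisfies L ⊆ Ǩ. -/
/-!
A tight path in `K` ending at `A` extends to `insert a A` whenever that set lies in `K`, so
members of `Ǩ` can be built one element at a time. Building `Z ∈ Ǩ` this way and uniting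
each stage with a fixed `X ∈ Ǩ` gives a tight path from `X` to `X ∪ Z` inside `K` (union
closure of `K`), so `Ǩ` is union-closed; the last step of a tight path shows accessibility.
Conversely, in an accessible `L ⊆ K` each member is reached from `∅` by repeatedly removing
an element inside `L`, and reversing this is a tight path in `K`.
-/

variable {α : Type*} [DecidableEq α] [Fintype α]

section

-- A fresh type, so that these lemmas do not carry the `Fintype α` instance.
variable {β : Type*} [DecidableEq β]

theorem Finset.exists_insert_eq_of_subset_of_card_sdiff_eq_one {s t : Finset β} (hst : s ⊆ t)
    (h : (t \ s).card = 1) : ∃ a ∉ s, insert a s = t := by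
  obtain ⟨a, ha⟩ := Finset.card_eq_one.mp h
  have hat : a ∈ t \ s := ha ▸ Finset.mem_singleton_self a
  refine ⟨a, (Finset.mem_sdiff.mp hat).2, ?_⟩
  rw [Finset.insert_eq, ← ha, Finset.union_comm, Finset.union_sdiff_of_subset hst]

theorem TightPath.extend {K : Set (Finset β)} {S T : Finset β} {a : β} (h : TightPath K S T)
    (ha : a ∉ T) (hK : insert a T ∈ K) : TightPath K S (insert a T) := by
  obtain ⟨k, Y, h0, hk, hmem, hstep⟩ := h
  refine ⟨k + 1, fun i => if i ≤ k then Y i else insert a T, by simp [h0], by simp, ?_, ?_⟩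
  · intro i _
    dsimp only
    split_ifs with hik
    · exact hmem i hik
    · exact hK
  · intro i hi
    rcases Nat.lt_or_ge i k with hik | hik
    · simpa [hik.le, Nat.succ_le_of_lt hik] using hstep i hik
    · obtain rfl : i = k := by omega
      have hsucc : ¬ i + 1 ≤ i := by omega
      simp only [le_refl, if_true, hsucc, if_false, hk]
      exact ⟨Finset.subset_insert a T, by rw [Finset.insert_sdiff_cancel ha, Finset.card_singleton]⟩

theorem checkFam_empty {K : Set (Finset β)} (hK : ∅ ∈ K) : ∅ ∈ checkFam K :=
  ⟨hK, 0, fun _ => ∅, rfl, rfl, fun _ _ => hK, fun i hi => absurd hi (Nat.not_lt_zero i)⟩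

theorem insert_mem_checkFam {K : Set (Finset β)} {A : Finset β} {a : β} (hA : A ∈ checkFam K)
    (hK : insert a A ∈ K) : insert a A ∈ checkFam K := by
  by_cases ha : a ∈ A
  · rwa [Finset.insert_eq_of_mem ha]
  · exact ⟨hK, hA.2.extend ha hK⟩

theorem checkFam_induction {K : Set (Finset β)} {P : Finset β → Prop} (empty : P ∅)
    (step : ∀ A a, A ∈ checkFam K → a ∉ A → insert a A ∈ K → P A → P (insert a A)) :
    ∀ X ∈ checkFam K, P X := by
  rintro X ⟨-, k, Y, h0, rfl, hmem, hstep⟩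
  suffices ∀ i ≤ k, Y i ∈ checkFam K ∧ P (Y i) from (this k le_rfl).2
  intro i
  induction i with
  | zero =>
    intro _
    refine ⟨⟨hmem 0 (Nat.zero_le k), 0, Y, h0, rfl, fun j hj => hmem j (by omega),
      fun j hj => absurd hj (Nat.not_lt_zero j)⟩, h0 ▸ empty⟩
  | succ i ih =>
    intro hi
    obtain ⟨hYi, hP⟩ := ih (by omega)
    obtain ⟨hsub, hcard⟩ := hstep i (by omega)
    obtain ⟨a, ha, heq⟩ := Finset.exists_insert_eq_of_subset_of_card_sdiff_eq_one hsub hcard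
    have hK : insert a (Y i) ∈ K := heq ▸ hmem (i + 1) hi
    rw [← heq]
    exact ⟨insert_mem_checkFam hYi hK, step _ a hYi ha hK hP⟩

theorem unionClosed_checkFam {K : Set (Finset β)} (hU : UnionClosed K) :
    UnionClosed (checkFam K) := by
  intro X hX Z hZ
  refine checkFam_induction (P := fun Z => X ∪ Z ∈ checkFam K) (by simpa using hX) ?_ Z hZ
  intro A a _ _ haK hXA
  rw [Finset.union_insert]
  exact insert_mem_checkFam hXA (Finset.union_insert a X A ▸ hU X hX.1 _ haK)

theorem accessible_checkFam (K : Set (Finset β)) : Accessible (checkFam K) := by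
  intro X hX
  refine checkFam_induction (P := fun X => X ≠ ∅ → ∃ x ∈ X, X.erase x ∈ checkFam K)
    (fun h => absurd rfl h) ?_ X hX
  intro A a hA ha _ _ _
  exact ⟨a, Finset.mem_insert_self a A, by rwa [Finset.erase_insert ha]⟩

theorem subset_checkFam_of_accessible {K L : Set (Finset β)} (hK : ∅ ∈ K) (hL : Accessible L)
    (hLK : L ⊆ K) : L ⊆ checkFam K := by
  intro X
  induction X using Finset.strongInduction with
  | H X ih =>
    intro hX
    rcases eq_or_ne X ∅ with rfl | hne
    · exact checkFam_empty hK
    obtain ⟨x, hx, hxL⟩ := hL X hX hne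
    have hXK : insert x (X.erase x) ∈ K := by rw [Finset.insert_erase hx]; exact hLK hX
    simpa only [Finset.insert_erase hx] using
      insert_mem_checkFam (ih _ (Finset.erase_ssubset hx) hxL) hXK

end

theorem stmt2 (K : Set (Finset α)) (hempty : ∅ ∈ K) (hU : UnionClosed K) :
    IsAntimatroid (checkFam K) ∧
      ∀ L : Set (Finset α), IsAntimatroid L → L ⊆ K → L ⊆ checkFam K :=
  ⟨⟨checkFam_empty hempty, unionClosed_checkFam hU, accessible_checkFam K⟩,
    fun _ hL hLK => subset_checkFam_of_accessible hempty hL.2.2 hLK⟩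
end

section
/- Let K be a union-closed family on a finite set Q with ∅ ∈ K, and X ⊆ Q. Then there exists a tight path from ∅ to X in K if and only if for every member S ∈ K that is a proper subset of X, there exists x ∈ X \ S with S ∪ {x} ∈ K. -/
/-!
Forward: along a tight path from `∅` to `X`, take the last member `Yᵢ` still contained in `S`.
The next member is `insert x Yᵢ` with `x ∉ S`, and union-closure gives
`S ∪ insert x Yᵢ = insert x S ∈ K`. Backward: starting from `∅`, the hypothesis lets us add one
element of `X` at a time while staying in `K`, until `X` is reached.
-/

variable {α : Type*} [DecidableEq α] [Fintype α]

open Finset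

namespace TightPath

variable {β : Type*} [DecidableEq β] {K : Set (Finset β)} {S T : Finset β}

theorem refl (hS : S ∈ K) : TightPath K S S :=
  ⟨0, fun _ => S, rfl, rfl, fun _ _ => hS, fun _ h => absurd h (Nat.not_lt_zero _)⟩

theorem cons {x : β} (hS : S ∈ K) (hx : x ∉ S) (h : TightPath K (insert x S) T) :
    TightPath K S T := by
  obtain ⟨k, Y, h0, hk, hmem, hstep⟩ := h
  refine ⟨k + 1, fun | 0 => S | i + 1 => Y i, rfl, hk, ?_, ?_⟩
  · rintro (_ | i) hi
    · exact hS
    · exact hmem i (by omega)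
  · rintro (_ | i) hi
    · rw [← covBy_iff_card_sdiff_eq_one]
      show S ⋖ Y 0
      rw [h0]
      exact covBy_iff_exists_insert.2 ⟨x, hx, rfl⟩
    · exact hstep i (by omega)

theorem exists_insert_mem_of_covBy_chain (hU : UnionClosed K) {k : ℕ} {Y : ℕ → Finset β}
    (hmem : ∀ i ≤ k, Y i ∈ K) (hstep : ∀ i < k, Y i ⋖ Y (i + 1)) (hS : S ∈ K)
    (h0 : Y 0 ⊆ S) (hk : ¬ Y k ⊆ S) : ∃ x ∈ Y k \ S, insert x S ∈ K := by
  induction k with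
  | zero => exact absurd h0 hk
  | succ k ih =>
    by_cases hkS : Y k ⊆ S
    · obtain ⟨x, -, hYx⟩ := covBy_iff_exists_insert.1 (hstep k k.lt_succ_self)
      have hunion := hU S hS _ (hmem (k + 1) le_rfl)
      rw [← hYx] at hk hunion ⊢
      have hxS : x ∉ S := fun hx => hk (insert_subset hx hkS)
      refine ⟨x, mem_sdiff.2 ⟨mem_insert_self _ _, hxS⟩, ?_⟩
      rwa [union_insert, union_eq_left.2 hkS] at hunion
    · obtain ⟨x, hx, hxK⟩ :=
        ih (fun i hi => hmem i (by omega)) (fun i hi => hstep i (by omega)) hkS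
      exact ⟨x, sdiff_subset_sdiff (hstep k k.lt_succ_self).le le_rfl hx, hxK⟩

theorem exists_insert_mem (hU : UnionClosed K) {R : Finset β} (h : TightPath K R T)
    (hS : S ∈ K) (hRS : R ⊆ S) (hTS : ¬ T ⊆ S) : ∃ x ∈ T \ S, insert x S ∈ K := by
  obtain ⟨k, Y, rfl, rfl, hmem, hstep⟩ := h
  exact exists_insert_mem_of_covBy_chain hU hmem
    (fun i hi => covBy_iff_card_sdiff_eq_one.2 (hstep i hi)) hS hRS hTS

theorem of_forall_exists_insert_mem {X : Finset β}
    (h : ∀ S ∈ K, S ⊂ X → ∃ x ∈ X \ S, insert x S ∈ K) {R : Finset β} (hR : R ∈ K)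
    (hRX : R ⊆ X) : TightPath K R X := by
  obtain rfl | hlt := hRX.eq_or_ssubset
  · exact refl hR
  obtain ⟨x, hx, hxK⟩ := h R hR hlt
  obtain ⟨hxX, hxR⟩ := mem_sdiff.1 hx
  have hsub : insert x R ⊆ X := insert_subset hxX hRX
  have : #(insert x R) ≤ #X := card_le_card hsub
  have : #(insert x R) = #R + 1 := card_insert_of_notMem hxR
  exact cons hR hxR (of_forall_exists_insert_mem h hxK hsub)
termination_by #X - #R

end TightPath

theorem stmt4 (K : Set (Finset α)) (hempty : ∅ ∈ K) (hU : UnionClosed K) (X : Finset α) :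
    TightPath K ∅ X ↔
      ∀ S ∈ K, S ⊂ X → ∃ x ∈ X \ S, insert x S ∈ K :=
  ⟨fun h _ hS hSX => h.exists_insert_mem hU hS (empty_subset _) hSX.2,
    fun h => .of_forall_exists_insert_mem h hempty (empty_subset X)⟩
end

section
/- Let R be a set of Horn rules on a finite set Q, and let C := {(A ∪ {q}, q) : (A, q) ∈ R} be the corresponding family of rooted sets. Then A(R) = L(C), i.e., the maximal antimatroid contained in K(R) equals the Korte–Lovász family determined by C. -/
variable {α : Type*} [DecidableEq α] [Fintype α]

/-- A Horn rule `(A, q)` accepts `X` if `q ∈ X` implies `X ∩ A ≠ ∅`. -/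
def Accepts (r : Finset α × α) (X : Finset α) : Prop :=
  r.2 ∈ X → (X ∩ r.1).Nonempty

/-- The union-closed family determined by a set of Horn rules. -/
def KFam (R : Set (Finset α × α)) : Set (Finset α) :=
  {X | ∀ r ∈ R, Accepts r X}

/-- The maximal antimatroid contained in `KFam R`. -/
def AFam (R : Set (Finset α × α)) : Set (Finset α) :=
  checkFam (KFam R)

/-- The Korte–Lovász family determined by a family of rooted sets. -/
def LFam (C : Set (Finset α × α)) : Set (Finset α) :=
  {X | ∃ l : List α, l.Nodup ∧ l.toFinset = X ∧
    ∀ (i : ℕ) (hi : i < l.length) (B : Finset α),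
      (B, l.get ⟨i, hi⟩) ∈ C → (B ∩ (l.take i).toFinset).Nonempty}

private lemma getElem_not_mem_take {l : List α} (hn : l.Nodup) {j : ℕ} (hj : j < l.length) :
    l[j] ∉ l.take j := by
  intro hm
  obtain ⟨i, hi, he⟩ := List.getElem_of_mem hm
  rw [List.getElem_take] at he
  have := (List.Nodup.getElem_inj_iff hn).mp he
  simp at hi; omega

private lemma toFinset_append_singleton (l : List α) (x : α) :
    (l ++ [x]).toFinset = insert x l.toFinset := by
  ext a; simp [or_comm]

private lemma aux2 (R : Set (Finset α × α)) (hnt : ∀ r ∈ R, r.2 ∉ r.1) :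
    ∀ (k : ℕ) (Y : ℕ → Finset α), Y 0 = ∅ → (∀ i ≤ k, Y i ∈ KFam R) →
    (∀ i < k, Y i ⊆ Y (i + 1) ∧ (Y (i + 1) \ Y i).card = 1) →
    ∃ l : List α, l.Nodup ∧ l.toFinset = Y k ∧
      ∀ (i : ℕ) (hi : i < l.length) (B : Finset α),
        (B, l.get ⟨i, hi⟩) ∈ ((fun r : Finset α × α => (insert r.2 r.1, r.2)) '' R) →
        (B ∩ (l.take i).toFinset).Nonempty := by
  intro k
  induction k with
  | zero =>
    intro Y h0 _ _
    exact ⟨[], List.nodup_nil, by simp [h0], fun i hi => by simp at hi⟩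
  | succ k IH =>
    intro Y h0 hmem hstep
    obtain ⟨l, hnd, hlt, hcond⟩ := IH Y h0 (fun i hi => hmem i (hi.trans (Nat.le_succ k)))
      (fun i hi => hstep i (hi.trans (Nat.lt_succ_self k)))
    obtain ⟨hsub, hcard⟩ := hstep k (Nat.lt_succ_self k)
    obtain ⟨x, hx⟩ := Finset.card_eq_one.mp hcard
    have hxY : x ∉ Y k := by
      have : x ∈ Y (k + 1) \ Y k := hx ▸ Finset.mem_singleton_self x
      exact (Finset.mem_sdiff.mp this).2
    have hY1 : Y (k + 1) = insert x (Y k) := by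
      have h := Finset.sdiff_union_of_subset hsub
      rw [hx] at h
      rw [← h]; ext a; simp [or_comm]
    have hxl : x ∉ l := by
      rw [← List.mem_toFinset, hlt]; exact hxY
    refine ⟨l ++ [x], ?_, ?_, ?_⟩
    · simp [List.nodup_append, hnd, hxl]
      rintro a ha rfl; exact hxl ha
    · rw [toFinset_append_singleton, hlt, hY1]
    · intro i hi B hB
      by_cases hik : i < l.length
      · have hg : (l ++ [x]).get ⟨i, hi⟩ = l.get ⟨i, hik⟩ := List.getElem_append_left hik
        rw [List.take_append_of_le_length hik.le]
        exact hcond i hik B (hg ▸ hB)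
      · have hieq : i = l.length := by simp at hi; omega
        subst hieq
        have hg : (l ++ [x]).get ⟨l.length, hi⟩ = x := by simp
        rw [hg] at hB
        obtain ⟨r, hr, he⟩ := hB
        have hq : r.2 = x := congrArg Prod.snd he
        have hBe : B = insert r.2 r.1 := (congrArg Prod.fst he).symm
        have hxm : r.2 ∈ Y (k + 1) := by rw [hq, hY1]; exact Finset.mem_insert_self x _
        obtain ⟨a, ha⟩ := hmem (k + 1) le_rfl r hr hxm
        rw [Finset.mem_inter] at ha
        have ha1 := ha.1
        rw [hY1, Finset.mem_insert] at ha1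
        rcases ha1 with h | h
        · exfalso; exact hnt r hr (by rw [hq]; exact h ▸ ha.2)
        · refine ⟨a, ?_⟩
          rw [List.take_append_of_le_length le_rfl, List.take_length, hlt, Finset.mem_inter, hBe]
          exact ⟨Finset.mem_insert_of_mem ha.2, h⟩

private lemma take_mem_KFam (R : Set (Finset α × α)) {l : List α} (hnd : l.Nodup)
    (hcond : ∀ (i : ℕ) (hi : i < l.length) (B : Finset α),
      (B, l.get ⟨i, hi⟩) ∈ ((fun r : Finset α × α => (insert r.2 r.1, r.2)) '' R) →
      (B ∩ (l.take i).toFinset).Nonempty) :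
    ∀ i, (l.take i).toFinset ∈ KFam R := by
  intro i r hr hq
  rw [List.mem_toFinset] at hq
  obtain ⟨j, hj, he⟩ := List.getElem_of_mem hq
  have hjl : j < l.length := by simp at hj; omega
  have hji : j < i := by simp at hj; omega
  rw [List.getElem_take] at he
  have hC : (insert r.2 r.1, l.get ⟨j, hjl⟩) ∈
      ((fun r : Finset α × α => (insert r.2 r.1, r.2)) '' R) := by
    refine ⟨r, hr, ?_⟩
    simp only [List.get_eq_getElem, he]
  obtain ⟨b, hb⟩ := hcond j hjl _ hC
  rw [Finset.mem_inter, Finset.mem_insert, List.mem_toFinset] at hb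
  rcases hb.1 with h | h
  · exfalso
    exact getElem_not_mem_take hnd hjl (by rw [he, ← h]; exact hb.2)
  · refine ⟨b, Finset.mem_inter.mpr ⟨?_, h⟩⟩
    rw [List.mem_toFinset]
    have hsub : l.take j ⊆ l.take i := by
      have h1 := List.take_subset j (l.take i)
      rwa [List.take_take, Nat.min_eq_left hji.le] at h1
    exact hsub hb.2

theorem stmt5 (R : Set (Finset α × α)) (hnt : ∀ r ∈ R, r.2 ∉ r.1) :
    AFam R = LFam ((fun r : Finset α × α => (insert r.2 r.1, r.2)) '' R) := by
  ext X
  constructor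
  · rintro ⟨hK, k, Y, h0, hk, hmem, hstep⟩
    obtain ⟨l, hnd, hlt, hcond⟩ := aux2 R hnt k Y h0 hmem hstep
    exact ⟨l, hnd, hlt.trans hk, hcond⟩
  · rintro ⟨l, hnd, hlt, hcond⟩
    have hmem := take_mem_KFam R hnd hcond
    have hX : X ∈ KFam R := by
      have := hmem l.length
      rwa [List.take_length, hlt] at this
    refine ⟨hX, l.length, fun i => (l.take i).toFinset,
      by show (l.take 0).toFinset = ∅; simp,
      by show (l.take l.length).toFinset = X; rw [List.take_length, hlt],
      fun i _ => hmem i, fun i hi => ?_⟩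
    have hstep : l.take (i + 1) = l.take i ++ [l[i]] := by
      rw [List.take_succ]; simp [List.getElem?_eq_getElem hi]
    have hni : l[i] ∉ (l.take i).toFinset := by
      rw [List.mem_toFinset]; exact getElem_not_mem_take hnd hi
    show (l.take i).toFinset ⊆ (l.take (i+1)).toFinset ∧
      ((l.take (i+1)).toFinset \ (l.take i).toFinset).card = 1
    rw [hstep, toFinset_append_singleton]
    constructor
    · exact Finset.subset_insert _ _
    · rw [Finset.insert_sdiff_of_notMem _ hni]
      simp
end

section
/- Let A be an antimatroid on a finite set Q and let (B, q) be a prime implicate of A (with q ∉ B). Then B ∪ {q} is a circuit of A with root q: B ∪ {q} is not free, but every proper subset of B ∪ {q} is free. -/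
/-!
The rule `(B, q)` forbids the trace `{q}` on `B ∪ {q}`, so `B ∪ {q}` is not free. Conversely,
primeness gives for each `a ∈ B` a feasible set containing `q` whose trace on `B` is `{a}`;
shrinking it along accessibility we may assume `q` is its last element, so that removing `q`
keeps it feasible. These sets and their `q`-deletions realise every singleton trace on a proper
subset of `B ∪ {q}`, and unions of them realise every trace.
-/

variable {α : Type*} [DecidableEq α] [Fintype α]

/-- A rule is an implicate of a family if it accepts every member. -/
def Implicate (K : Set (Finset α)) (r : Finset α × α) : Prop :=
  ∀ X ∈ K, Accepts r X

/-- `X` is free in the family `A` if every subset of `X` is a trace of a member of `A`. -/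
def FreeIn (A : Set (Finset α)) (X : Finset α) : Prop :=
  ∀ S ⊆ X, ∃ K ∈ A, X ∩ K = S

/-- A circuit: not free, but every proper subset is free. -/
def IsCircuit (A : Set (Finset α)) (C : Finset α) : Prop :=
  ¬ FreeIn A C ∧ ∀ C' ⊂ C, FreeIn A C'

section

omit [Fintype α]

theorem inter_eq_singleton_of_subset_insert {B C X : Finset α} {q y : α}
    (hCB : C ⊆ insert q B) (hqC : q ∈ C) (hqX : q ∈ X) (hyC : y ∉ C) (hXB : X ∩ B = {y}) :
    C ∩ X = {q} := by
  ext z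
  simp only [Finset.mem_inter, Finset.mem_singleton]
  constructor
  · rintro ⟨hzC, hzX⟩
    refine (Finset.mem_insert.1 (hCB hzC)).resolve_right fun hzB => hyC ?_
    have hzXB : z ∈ X ∩ B := Finset.mem_inter.2 ⟨hzX, hzB⟩
    rw [hXB, Finset.mem_singleton] at hzXB
    exact hzXB ▸ hzC
  · rintro rfl
    exact ⟨hqC, hqX⟩

theorem inter_erase_eq_singleton_of_subset_insert {B C X : Finset α} {q c : α}
    (hCB : C ⊆ insert q B) (hcC : c ∈ C) (hcq : c ≠ q) (hXB : X ∩ B = {c}) :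
    C ∩ X.erase q = {c} := by
  ext z
  simp only [Finset.mem_inter, Finset.mem_erase, Finset.mem_singleton]
  constructor
  · rintro ⟨hzC, hzq, hzX⟩
    have hzB : z ∈ B := (Finset.mem_insert.1 (hCB hzC)).resolve_left hzq
    have hzXB : z ∈ X ∩ B := Finset.mem_inter.2 ⟨hzX, hzB⟩
    rwa [hXB, Finset.mem_singleton] at hzXB
  · intro hzc
    have hcX : c ∈ X ∩ B := hXB ▸ Finset.mem_singleton_self c
    exact hzc ▸ ⟨hcC, hcq, (Finset.mem_inter.1 hcX).1⟩

variable {A : Set (Finset α)}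

theorem freeIn_of_forall_inter_eq_singleton (h0 : ∅ ∈ A) (hu : UnionClosed A) {C : Finset α}
    (h : ∀ c ∈ C, ∃ K ∈ A, C ∩ K = {c}) : FreeIn A C := by
  choose! K hKA hKC using h
  intro S hS
  refine ⟨S.sup K, Finset.sup_induction h0 hu fun c hc => hKA c (hS hc), ?_⟩
  ext x
  simp only [Finset.mem_inter, Finset.mem_sup]
  constructor
  · rintro ⟨hxC, c, hcS, hxK⟩
    have hxc : x ∈ C ∩ K c := Finset.mem_inter.2 ⟨hxC, hxK⟩
    rw [hKC c (hS hcS), Finset.mem_singleton] at hxc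
    exact hxc ▸ hcS
  · intro hxS
    have hxK : x ∈ C ∩ K x := by rw [hKC x (hS hxS)]; exact Finset.mem_singleton_self x
    exact ⟨hS hxS, x, hxS, (Finset.mem_inter.1 hxK).2⟩

theorem Accessible.exists_subset_erase_mem (hacc : Accessible A) {q : α} {X : Finset α}
    (hX : X ∈ A) (hqX : q ∈ X) : ∃ Y ∈ A, Y ⊆ X ∧ q ∈ Y ∧ Y.erase q ∈ A := by
  induction X using Finset.strongInduction with
  | H X ih =>
    obtain ⟨x, hxX, hxA⟩ := hacc X hX (Finset.ne_empty_of_mem hqX)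
    by_cases hxq : x = q
    · subst hxq
      exact ⟨X, hX, subset_rfl, hxX, hxA⟩
    · obtain ⟨Y, hYA, hYX, hqY, hYq⟩ :=
        ih _ (Finset.erase_ssubset hxX) hxA (Finset.mem_erase.2 ⟨Ne.symm hxq, hqX⟩)
      exact ⟨Y, hYA, hYX.trans (Finset.erase_subset x X), hqY, hYq⟩

theorem Implicate.exists_inter_eq_singleton (hacc : Accessible A) {B : Finset α} {q a : α}
    (himp : Implicate A (B, q)) (hnot : ¬ Implicate A (B.erase a, q)) :
    ∃ X ∈ A, q ∈ X ∧ X ∩ B = {a} ∧ X.erase q ∈ A := by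
  simp only [Implicate, Accepts, not_forall, Finset.not_nonempty_iff_eq_empty] at hnot
  obtain ⟨X, hXA, hqX, hXa⟩ := hnot
  obtain ⟨Y, hYA, hYX, hqY, hYq⟩ := hacc.exists_subset_erase_mem hXA hqX
  refine ⟨Y, hYA, hqY, (himp Y hYA hqY).subset_singleton_iff.1 fun y hy => ?_, hYq⟩
  rw [Finset.mem_singleton]
  by_contra hya
  have hy' : y ∈ X ∩ B.erase a := by
    simp only [Finset.mem_inter, Finset.mem_erase] at hy ⊢
    exact ⟨hYX hy.1, hya, hy.2⟩
  simp [hXa] at hy'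

theorem Implicate.not_freeIn_insert {B : Finset α} {q : α} (hqB : q ∉ B)
    (himp : Implicate A (B, q)) : ¬ FreeIn A (insert q B) := by
  intro hfree
  obtain ⟨K, hKA, hK⟩ := hfree {q} (Finset.singleton_subset_iff.2 (Finset.mem_insert_self q B))
  have hqK : q ∈ K := (Finset.mem_inter.1 (hK ▸ Finset.mem_singleton_self q)).2
  obtain ⟨b, hb⟩ := himp K hKA hqK
  have hbK : b ∈ insert q B ∩ K := by
    simp only [Finset.mem_inter] at hb ⊢
    exact ⟨Finset.mem_insert_of_mem hb.2, hb.1⟩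
  rw [hK, Finset.mem_singleton] at hbK
  exact hqB (hbK ▸ (Finset.mem_inter.1 hb).2)

end

theorem stmt12 (A : Set (Finset α)) (hA : IsAntimatroid A)
    (B : Finset α) (q : α) (hq : q ∉ B)
    (himp : Implicate A (B, q))
    (hprime : ∀ a ∈ B, ¬ Implicate A (B.erase a, q)) :
    IsCircuit A (insert q B) := by
  obtain ⟨h0, hu, hacc⟩ := hA
  refine ⟨himp.not_freeIn_insert hq, fun C hC => freeIn_of_forall_inter_eq_singleton h0 hu ?_⟩
  intro c hc
  rcases Finset.mem_insert.1 (hC.subset hc) with rfl | hcB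
  · obtain ⟨y, hyQB, hyC⟩ := Finset.exists_of_ssubset hC
    have hyB : y ∈ B := (Finset.mem_insert.1 hyQB).resolve_left fun h => hyC (h ▸ hc)
    obtain ⟨X, hXA, hqX, hXB, -⟩ := himp.exists_inter_eq_singleton hacc (hprime y hyB)
    exact ⟨X, hXA, inter_eq_singleton_of_subset_insert hC.subset hc hqX hyC hXB⟩
  · obtain ⟨X, -, -, hXB, hXq⟩ := himp.exists_inter_eq_singleton hacc (hprime c hcB)
    have hcq : c ≠ q := fun h => hq (h ▸ hcB)
    exact ⟨X.erase q, hXq, inter_erase_eq_singleton_of_subset_insert hC.subset hc hcq hXB⟩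
end

section
/- Let A be an antimatroid on finite set Q, (B, q) a prime implicate of A, and x ∈ B. Then the set (B ∪ {q}) \ {x} is free in A. -/
variable {α : Type*} [DecidableEq α] [Fintype α]

/-!
Primality of `(B, q)` means that for each `a ∈ B` some feasible set contains `q` and meets `B`
exactly in `a`. Shelling such a set down until `q` is the next element to enter gives a feasible
set avoiding `q` which, since `(B, q)` is an implicate, still meets `B` exactly in `a`. Unions of
these two kinds of sets realise every trace on `(B ∪ {q}) \ {x}`: the set attached to `x` itself
supplies `q` without any element of `B \ {x}`.
-/

section

variable {β : Type*} [DecidableEq β] {A : Set (Finset β)}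

theorem freeIn_of_forall_exists_subset (h0 : ∅ ∈ A) (hU : UnionClosed A) {X : Finset β}
    (h : ∀ S ⊆ X, ∀ y ∈ S, ∃ K ∈ A, y ∈ K ∧ X ∩ K ⊆ S) : FreeIn A X := by
  intro S hS
  choose! K hKA hyK hKS using h S hS
  refine ⟨S.sup K, Finset.sup_mem A h0 hU S K hKA, ?_⟩
  ext y
  simp only [Finset.mem_inter, Finset.mem_sup]
  constructor
  · rintro ⟨hyX, z, hzS, hyz⟩
    exact hKS z hzS (Finset.mem_inter.mpr ⟨hyX, hyz⟩)
  · exact fun hyS => ⟨hS hyS, y, hyS, hyK y hyS⟩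

theorem Accessible.exists_subset_notMem_insert_mem (hacc : Accessible A) {q : β} :
    ∀ K ∈ A, q ∈ K → ∃ Z ∈ A, Z ⊆ K ∧ q ∉ Z ∧ insert q Z ∈ A := by
  intro K
  induction K using Finset.strongInduction with
  | _ K ih =>
    intro hKA hqK
    obtain ⟨y, hyK, hyA⟩ := hacc K hKA (Finset.ne_empty_of_mem hqK)
    by_cases hyq : y = q
    · subst hyq
      exact ⟨K.erase y, hyA, Finset.erase_subset _ _, Finset.notMem_erase _ _,
        by rwa [Finset.insert_erase hqK]⟩
    · obtain ⟨Z, hZA, hZK, hqZ, hins⟩ :=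
        ih _ (Finset.erase_ssubset hyK) hyA (Finset.mem_erase.mpr ⟨Ne.symm hyq, hqK⟩)
      exact ⟨Z, hZA, hZK.trans (Finset.erase_subset _ _), hqZ, hins⟩

variable {B : Finset β} {q a : β}

theorem Implicate.exists_mem_inter_eq_singleton (himp : Implicate A (B, q))
    (hnot : ¬ Implicate A (B.erase a, q)) : ∃ K ∈ A, q ∈ K ∧ B ∩ K = {a} := by
  simp only [Implicate, Accepts, not_forall, Finset.not_nonempty_iff_eq_empty] at hnot
  obtain ⟨K, hKA, hqK, hKB⟩ := hnot
  have hunique : ∀ b ∈ B ∩ K, b = a := by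
    intro b hb
    by_contra hba
    have : b ∈ K ∩ B.erase a := by grind
    simp [hKB] at this
  obtain ⟨c, hc⟩ := himp K hKA hqK
  have hcB : c ∈ B ∩ K := by rwa [Finset.inter_comm]
  refine ⟨K, hKA, hqK, Finset.eq_singleton_iff_unique_mem.mpr ⟨?_, hunique⟩⟩
  exact hunique c hcB ▸ hcB

theorem erase_insert_inter_subset_of_inter_eq_singleton {K : Finset β} (x : β)
    (hKB : B ∩ K = {a}) : (insert q B).erase x ∩ K ⊆ ({q, a} : Finset β).erase x := by
  intro z
  simp only [Finset.mem_inter, Finset.mem_erase, Finset.mem_insert, Finset.mem_singleton]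
  rintro ⟨⟨hzx, hzq | hzB⟩, hzK⟩
  · exact ⟨hzx, Or.inl hzq⟩
  · exact ⟨hzx, Or.inr (Finset.mem_singleton.mp (hKB ▸ Finset.mem_inter.mpr ⟨hzB, hzK⟩))⟩

theorem Implicate.exists_notMem_inter_eq_singleton (hacc : Accessible A)
    (himp : Implicate A (B, q)) (hq : q ∉ B) {K : Finset β} (hKA : K ∈ A) (hqK : q ∈ K)
    (hKB : B ∩ K = {a}) : ∃ W ∈ A, q ∉ W ∧ B ∩ W = {a} := by
  obtain ⟨Z, hZA, hZK, hqZ, hins⟩ := hacc.exists_subset_notMem_insert_mem K hKA hqK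
  refine ⟨Z, hZA, hqZ, Finset.eq_singleton_iff_unique_mem.mpr ⟨?_, ?_⟩⟩
  · obtain ⟨b, hb⟩ := himp _ hins (Finset.mem_insert_self q Z)
    obtain ⟨hbqZ, hbB⟩ := Finset.mem_inter.mp hb
    have hbZ : b ∈ Z := (Finset.mem_insert.mp hbqZ).resolve_left fun hbq => hq (hbq ▸ hbB)
    obtain rfl : b = a := Finset.mem_singleton.mp (hKB ▸ Finset.mem_inter.mpr ⟨hbB, hZK hbZ⟩)
    exact Finset.mem_inter.mpr ⟨hbB, hbZ⟩
  · intro b hb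
    exact Finset.mem_singleton.mp (hKB ▸ Finset.inter_subset_inter_left hZK hb)

end

theorem stmt13 (A : Set (Finset α)) (hA : IsAntimatroid A)
    (B : Finset α) (q : α) (hq : q ∉ B)
    (himp : Implicate A (B, q))
    (hprime : ∀ a ∈ B, ¬ Implicate A (B.erase a, q))
    (x : α) (hx : x ∈ B) :
    FreeIn A ((insert q B).erase x) := by
  obtain ⟨h0, hU, hacc⟩ := hA
  have hK : ∀ a ∈ B, ∃ K ∈ A, q ∈ K ∧ B ∩ K = {a} := fun a ha =>
    himp.exists_mem_inter_eq_singleton (hprime a ha)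
  apply freeIn_of_forall_exists_subset h0 hU
  intro S hS y hyS
  rcases Finset.mem_insert.mp (Finset.mem_of_mem_erase (hS hyS)) with rfl | hyB
  · obtain ⟨K, hKA, hyK, hKB⟩ := hK x hx
    refine ⟨K, hKA, hyK, fun z hz => ?_⟩
    have := erase_insert_inter_subset_of_inter_eq_singleton x hKB hz
    simp only [Finset.mem_erase, Finset.mem_insert, Finset.mem_singleton] at this
    obtain ⟨hzx, rfl | rfl⟩ := this
    exacts [hyS, absurd rfl hzx]
  obtain ⟨K, hKA, hqK, hKB⟩ := hK y hyB
  have hyK : y ∈ K := Finset.mem_of_mem_inter_right (hKB ▸ Finset.mem_singleton_self y)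
  by_cases hqS : q ∈ S
  · refine ⟨K, hKA, hyK, fun z hz => ?_⟩
    have := erase_insert_inter_subset_of_inter_eq_singleton x hKB hz
    simp only [Finset.mem_erase, Finset.mem_insert, Finset.mem_singleton] at this
    obtain ⟨-, rfl | rfl⟩ := this <;> assumption
  · obtain ⟨W, hWA, hqW, hWB⟩ := himp.exists_notMem_inter_eq_singleton hacc hq hKA hqK hKB
    have hyW : y ∈ W := Finset.mem_of_mem_inter_right (hWB ▸ Finset.mem_singleton_self y)
    refine ⟨W, hWA, hyW, fun z hz => ?_⟩
    have := erase_insert_inter_subset_of_inter_eq_singleton x hWB hz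
    simp only [Finset.mem_erase, Finset.mem_insert, Finset.mem_singleton] at this
    obtain ⟨-, rfl | rfl⟩ := this
    exacts [absurd (Finset.mem_of_mem_inter_right hz) hqW, hyS]
end

section
/- For a set R of Horn rules on a finite set Q, every critical rule (A, q) of the antimatroid A(R) is dominated by some rule of R: there exists (A', q) ∈ R with A ⊆ A'. -/
variable {α : Type*} [DecidableEq α] [Fintype α]

/-- `(A, q)` is a critical rule of the antimatroid `AFam R`: with `X` the maximal
member of `AFam R` contained in `Q \ (A ∪ {q})`, one has `X ∪ {q} ∉ AFam R` and
`X ∪ {q, s} ∈ AFam R` for every `s ∈ A`. -/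
def CriticalRule (R : Set (Finset α × α)) (A : Finset α) (q : α) : Prop :=
  q ∉ A ∧ ∃ X : Finset α, X ∈ AFam R ∧ X ⊆ Finset.univ \ insert q A ∧
    (∀ Z ∈ AFam R, Z ⊆ Finset.univ \ insert q A → Z ⊆ X) ∧
    insert q X ∉ AFam R ∧ ∀ s ∈ A, insert s (insert q X) ∈ AFam R

/-! Extending the tight path to `X` shows that `X ∪ {q}` must violate a rule of `R`; since `X`
satisfies it, that rule has the form `(B, q)` with `B` disjoint from `X ∪ {q}`. Each `X ∪ {q, s}`
with `s ∈ A` satisfies `(B, q)`, which forces `s ∈ B`. -/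

omit [Fintype α] in
theorem TightPath.snoc_s14 {K : Set (Finset α)} {S T : Finset α} (hST : TightPath K S T)
    {q : α} (hq : q ∉ T) (hK : insert q T ∈ K) : TightPath K S (insert q T) := by
  obtain ⟨k, Y, h0, hk, hmem, hstep⟩ := hST
  refine ⟨k + 1, Function.update Y (k + 1) (insert q T), by simp [h0], by simp, ?_, ?_⟩
  · intro i hi
    rcases Nat.le_succ_iff.mp hi with hik | rfl
    · simpa [Function.update, show i ≠ k + 1 by omega] using hmem i hik
    · simpa using hK
  · intro i hi
    rcases Nat.lt_succ_iff_lt_or_eq.mp hi with hik | rfl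
    · simpa [Function.update, show i ≠ k + 1 by omega, show i ≠ k by omega]
        using hstep i hik
    · simp [Function.update, hk, Finset.insert_sdiff_cancel hq]

omit [Fintype α] in
theorem insert_mem_checkFam_s14 {K : Set (Finset α)} {X : Finset α} (hX : X ∈ checkFam K)
    {q : α} (hq : q ∉ X) (hK : insert q X ∈ K) : insert q X ∈ checkFam K :=
  ⟨hK, hX.2.snoc_s14 hq hK⟩

omit [Fintype α] in
theorem exists_rule_disjoint_insert {R : Set (Finset α × α)} {X : Finset α} {q : α}
    (hX : X ∈ KFam R) (hqX : insert q X ∉ KFam R) :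
    ∃ B, (B, q) ∈ R ∧ Disjoint (insert q X) B := by
  simp only [KFam, Set.mem_ofPred_eq, not_forall] at hqX
  obtain ⟨⟨B, p⟩, hr, hrej⟩ := hqX
  simp only [Accepts, Classical.not_imp, Finset.not_nonempty_iff_eq_empty,
    ← Finset.disjoint_iff_inter_eq_empty] at hrej
  obtain ⟨hp, hdisj⟩ := hrej
  obtain rfl | hpX := Finset.mem_insert.mp hp
  · exact ⟨B, hr, hdisj⟩
  · obtain ⟨x, hx⟩ := hX _ hr hpX
    rw [Finset.mem_inter] at hx
    exact absurd hx.2 (Finset.disjoint_left.mp hdisj (Finset.mem_insert_of_mem hx.1))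

omit [Fintype α] in
theorem Accepts.mem_of_insert {B Y : Finset α} {q s : α} (h : Accepts (B, q) (insert s Y))
    (hq : q ∈ Y) (hYB : Disjoint Y B) : s ∈ B := by
  obtain ⟨x, hx⟩ := h (Finset.mem_insert_of_mem hq)
  obtain ⟨hxsY, hxB⟩ := Finset.mem_inter.mp hx
  obtain rfl | hxY := Finset.mem_insert.mp hxsY
  · exact hxB
  · exact absurd hxB (Finset.disjoint_left.mp hYB hxY)

theorem stmt14 (R : Set (Finset α × α)) (A : Finset α) (q : α)
    (h : CriticalRule R A q) :
    ∃ A' : Finset α, (A', q) ∈ R ∧ A ⊆ A' := by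
  obtain ⟨_, X, hXA, hXsub, -, hqXA, hsA⟩ := h
  have hqX : q ∉ X := fun hq => by simpa using hXsub hq
  have hqXK : insert q X ∉ KFam R := fun hK => hqXA (insert_mem_checkFam_s14 hXA hqX hK)
  obtain ⟨B, hBR, hdisj⟩ := exists_rule_disjoint_insert hXA.1 hqXK
  exact ⟨B, hBR, fun s hs =>
    ((hsA s hs).1 _ hBR).mem_of_insert (Finset.mem_insert_self q X) hdisj⟩
end

section
/- Let R be a set of Horn rules on a finite set Q and let R* be the set of critical rules of the antimatroid A(R). Then A(R*) = A(R). -/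
variable {α : Type*} [DecidableEq α] [Fintype α]

/-! ### Auxiliary lemmas -/

lemma aux_step_insert {Y Y' : Finset α} (hsub : Y ⊆ Y') (hcard : (Y' \ Y).card = 1) :
    ∃ t, t ∉ Y ∧ Y' = insert t Y := by
  obtain ⟨t, ht⟩ := Finset.card_eq_one.mp hcard
  refine ⟨t, ?_, ?_⟩
  · have : t ∈ Y' \ Y := ht ▸ Finset.mem_singleton_self t
    exact (Finset.mem_sdiff.mp this).2
  · have h1 : Y ∪ Y' \ Y = Y' := Finset.union_sdiff_of_subset hsub
    rw [ht] at h1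
    rw [← h1, Finset.union_comm]
    rw [Finset.insert_eq]

lemma empty_mem_checkFam {K : Set (Finset α)} (h : ∅ ∈ K) : ∅ ∈ checkFam K :=
  ⟨h, 0, fun _ => ∅, rfl, rfl, fun _ _ => h, fun i hi => absurd hi (Nat.not_lt_zero i)⟩

lemma checkFam_mem_of_mem {K : Set (Finset α)} {X : Finset α} (h : X ∈ checkFam K) : X ∈ K :=
  h.1

/-- Extend a tight path by one element. -/
lemma checkFam_insert_step {K : Set (Finset α)} {W W' : Finset α}
    (hW : W ∈ checkFam K) (hW' : W' ∈ K) (hsub : W ⊆ W') (hcard : (W' \ W).card = 1) :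
    W' ∈ checkFam K := by
  obtain ⟨hWK, k, Y, h0, hk, hmem, hstep⟩ := hW
  refine ⟨hW', k + 1, fun i => if i ≤ k then Y i else W', by simp [h0], by simp, ?_, ?_⟩
  · intro i _
    by_cases h : i ≤ k
    · simpa [h] using hmem i h
    · simpa [h] using hW'
  · intro i hi
    rcases Nat.lt_or_ge i k with h | h
    · have h1 : i ≤ k := le_of_lt h
      have h2 : i + 1 ≤ k := h
      simpa [h1, h2] using hstep i h
    · have hik : i = k := le_antisymm (Nat.lt_succ_iff.mp hi) h
      subst hik
      have h2 : ¬ (i + 1 ≤ i) := by omega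
      simp only [le_refl, if_true, h2, if_false, hk]
      exact ⟨hsub, hcard⟩

/-- Every point along a tight path from `∅` is itself reachable. -/
lemma checkFam_of_prefix {K : Set (Finset α)} {k : ℕ} {Y : ℕ → Finset α}
    (h0 : Y 0 = ∅) (hmem : ∀ i ≤ k, Y i ∈ K)
    (hstep : ∀ i < k, Y i ⊆ Y (i + 1) ∧ (Y (i + 1) \ Y i).card = 1) :
    ∀ i ≤ k, Y i ∈ checkFam K := fun i hi =>
  ⟨hmem i hi, i, Y, h0, rfl, fun j hj => hmem j (hj.trans hi),
    fun j hj => hstep j (lt_of_lt_of_le hj hi)⟩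

lemma path_mono {k : ℕ} {Y : ℕ → Finset α}
    (hstep : ∀ i < k, Y i ⊆ Y (i + 1) ∧ (Y (i + 1) \ Y i).card = 1) :
    ∀ i j, i ≤ j → j ≤ k → Y i ⊆ Y j := by
  intro i j hij hjk
  induction j with
  | zero => simp_all
  | succ n ih =>
    rcases Nat.lt_or_ge i (n + 1) with h | h
    · have h1 : Y i ⊆ Y n := ih (Nat.lt_succ_iff.mp h) (le_of_lt hjk)
      exact h1.trans (hstep n hjk).1
    · have : i = n + 1 := le_antisymm hij h
      subst this; exact subset_rfl

lemma checkFam_unionClosed {K : Set (Finset α)} (hK : UnionClosed K) :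
    UnionClosed (checkFam K) := by
  intro X hX T hT
  obtain ⟨hTK, m, Z, h0, hm, hmem, hstep⟩ := hT
  suffices h : ∀ j ≤ m, X ∪ Z j ∈ checkFam K by
    have := h m le_rfl
    rwa [hm] at this
  intro j
  induction j with
  | zero => intro _; simpa [h0] using hX
  | succ n ih =>
    intro hn
    have hn' : n < m := hn
    have ihn := ih (le_of_lt hn')
    obtain ⟨t, htn, heq⟩ := aux_step_insert (hstep n hn').1 (hstep n hn').2
    by_cases htX : t ∈ X ∪ Z n
    · have : X ∪ Z (n + 1) = X ∪ Z n := by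
        rw [heq]
        ext x
        simp only [Finset.mem_union, Finset.mem_insert]
        constructor
        · rintro (hx | hx | hx)
          · exact Or.inl hx
          · subst hx; simpa using htX
          · exact Or.inr hx
        · rintro (hx | hx)
          · exact Or.inl hx
          · exact Or.inr (Or.inr hx)
      rw [this]; exact ihn
    · have hins : X ∪ Z (n + 1) = insert t (X ∪ Z n) := by
        rw [heq, Finset.union_comm, Finset.insert_union, Finset.union_comm]
      have hK' : X ∪ Z (n + 1) ∈ K := hK X hX.1 (Z (n + 1)) (hmem (n + 1) hn)
      refine checkFam_insert_step ihn hK' ?_ ?_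
      · rw [hins]; exact Finset.subset_insert _ _
      · rw [hins, Finset.insert_sdiff_cancel htX, Finset.card_singleton]

/-- Exchange along tight paths: a strictly larger reachable set provides an
addable element. -/
lemma checkFam_exchange {K : Set (Finset α)} (hK : UnionClosed K)
    {S T : Finset α} (hS : S ∈ checkFam K) (hT : T ∈ checkFam K) (hST : S ⊆ T)
    (hne : S ≠ T) :
    ∃ t ∈ T, t ∉ S ∧ insert t S ∈ checkFam K := by
  obtain ⟨hTK, m, Z, h0, hm, hmem, hstep⟩ := hT
  suffices h : ∀ j ≤ m, (Z j ⊆ S) ∨ ∃ t ∈ T, t ∉ S ∧ insert t S ∈ checkFam K by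
    rcases h m le_rfl with h | h
    · rw [hm] at h
      exact absurd (subset_antisymm hST h) hne
    · exact h
  intro j
  induction j with
  | zero => intro _; left; simp [h0]
  | succ n ih =>
    intro hn
    have hn' : n < m := hn
    rcases ih (le_of_lt hn') with hsub | hdone
    · obtain ⟨t, htn, heq⟩ := aux_step_insert (hstep n hn').1 (hstep n hn').2
      by_cases htS : t ∈ S
      · left
        rw [heq]
        exact Finset.insert_subset htS hsub
      · right
        refine ⟨t, ?_, htS, ?_⟩
        · have : Z (n + 1) ⊆ Z m := path_mono hstep (n + 1) m hn le_rfl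
          rw [← hm]
          exact this (heq ▸ Finset.mem_insert_self t (Z n))
        · have hU : S ∪ Z (n + 1) = insert t S := by
            rw [heq]
            ext x
            simp only [Finset.mem_union, Finset.mem_insert]
            constructor
            · rintro (hx | hx | hx)
              · exact Or.inr hx
              · exact Or.inl hx
              · exact Or.inr (hsub hx)
            · rintro (hx | hx)
              · exact Or.inr (Or.inl hx)
              · exact Or.inl hx
          have hinsK : insert t S ∈ K := hU ▸ hK S hS.1 (Z (n + 1)) (hmem (n + 1) hn)
          refine checkFam_insert_step hS hinsK (Finset.subset_insert _ _) ?_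
          rw [Finset.insert_sdiff_cancel htS, Finset.card_singleton]
    · right; exact hdone

lemma empty_mem_KFam (R : Set (Finset α × α)) : ∅ ∈ KFam R :=
  fun r _ h => absurd h (Finset.notMem_empty _)

lemma KFam_unionClosed (R : Set (Finset α × α)) : UnionClosed (KFam R) := by
  intro X hX Y hY r hr hq
  rcases Finset.mem_union.mp hq with h | h
  · obtain ⟨x, hx⟩ := hX r hr h
    exact ⟨x, Finset.mem_inter.mpr ⟨Finset.mem_union_left _ (Finset.mem_inter.mp hx).1,
      (Finset.mem_inter.mp hx).2⟩⟩
  · obtain ⟨x, hx⟩ := hY r hr h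
    exact ⟨x, Finset.mem_inter.mpr ⟨Finset.mem_union_right _ (Finset.mem_inter.mp hx).1,
      (Finset.mem_inter.mp hx).2⟩⟩

/-- Key construction: if `Y` is feasible but `insert q Y` is not, there is a
critical rule `(A, q)` with `A` disjoint from `insert q Y`. -/
lemma exists_critical_rule (R : Set (Finset α × α)) {Y : Finset α} {q : α}
    (hY : Y ∈ AFam R) (hq : insert q Y ∉ AFam R) :
    ∃ A : Finset α, CriticalRule R A q ∧ ∀ s ∈ insert q Y, s ∉ A := by
  classical
  have hUC : UnionClosed (AFam R) := checkFam_unionClosed (KFam_unionClosed R)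
  set D : Set (Finset α) := {Z | Z ∈ AFam R ∧ Y ⊆ Z ∧ insert q Z ∉ AFam R} with hD
  have hYD : Y ∈ D := ⟨hY, subset_rfl, hq⟩
  obtain ⟨X, hXD, hmax⟩ :=
    Set.Finite.exists_maximalFor Finset.card D (Set.toFinite D) ⟨Y, hYD⟩
  obtain ⟨hXF, hYX, hqXF⟩ := hXD
  have hqX : q ∉ X := fun h => hqXF (by rwa [Finset.insert_eq_self.mpr h])
  -- maximality of X in D, stated for insertion of one element
  have hmax' : ∀ t ∉ X, insert t X ∈ AFam R → insert q (insert t X) ∈ AFam R := by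
    intro t htX htF
    by_contra hcon
    have hmem : insert t X ∈ D := ⟨htF, hYX.trans (Finset.subset_insert _ _), hcon⟩
    have := hmax hmem (Finset.card_le_card (Finset.subset_insert _ _))
    rw [Finset.card_insert_of_notMem htX] at this
    omega
  set A : Finset α :=
    Finset.univ.filter (fun s => s ∉ X ∧ s ≠ q ∧ insert s (insert q X) ∈ AFam R) with hA
  have hmemA : ∀ s, s ∈ A ↔ s ∉ X ∧ s ≠ q ∧ insert s (insert q X) ∈ AFam R := by
    intro s; simp [hA]
  have hqA : q ∉ A := fun h => ((hmemA q).mp h).2.1 rfl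
  refine ⟨A, ⟨hqA, X, hXF, ?_, ?_, hqXF, fun s hs => ((hmemA s).mp hs).2.2⟩, ?_⟩
  · -- X ⊆ univ \ insert q A
    intro x hx
    rw [Finset.mem_sdiff, Finset.mem_insert]
    refine ⟨Finset.mem_univ x, ?_⟩
    rintro (h | h)
    · exact hqX (h ▸ hx)
    · exact ((hmemA x).mp h).1 hx
  · -- maximality of X
    intro Z hZ hZsub
    by_contra hnot
    have hXZ : X ∪ Z ∈ AFam R := hUC X hXF Z hZ
    have hne : X ≠ X ∪ Z := by
      intro h
      apply hnot
      intro z hz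
      rw [h]
      exact Finset.mem_union_right _ hz
    obtain ⟨t, htU, htX, htF⟩ :=
      checkFam_exchange (KFam_unionClosed R) hXF hXZ Finset.subset_union_left hne
    have htZ : t ∈ Z := by
      rcases Finset.mem_union.mp htU with h | h
      · exact absurd h htX
      · exact h
    have htq : t ≠ q := by
      intro h
      have := hZsub htZ
      rw [Finset.mem_sdiff, Finset.mem_insert] at this
      exact this.2 (Or.inl h)
    have htA : t ∈ A := (hmemA t).mpr ⟨htX, htq,
      (Finset.insert_comm q t X) ▸ hmax' t htX htF⟩
    have := hZsub htZ
    rw [Finset.mem_sdiff, Finset.mem_insert] at this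
    exact this.2 (Or.inr htA)
  · -- disjointness from insert q Y
    intro s hs hsA
    rcases Finset.mem_insert.mp hs with h | h
    · exact ((hmemA s).mp hsA).2.1 h
    · exact ((hmemA s).mp hsA).1 (hYX h)

/-- Every member of `AFam R` accepts every critical rule. -/
lemma AFam_subset_KFam_critical (R : Set (Finset α × α)) :
    AFam R ⊆ KFam {r : Finset α × α | CriticalRule R r.1 r.2} := by
  intro X hX r hr hqmem
  obtain ⟨A, q⟩ := r
  obtain ⟨hqA, X₀, hX₀F, hX₀sub, hX₀max, hqX₀, hsA⟩ := hr
  by_contra hne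
  rw [Finset.not_nonempty_iff_eq_empty] at hne
  have hXA : ∀ x ∈ X, x ∉ A := by
    intro x hx hxA
    have : x ∈ X ∩ A := Finset.mem_inter.mpr ⟨hx, hxA⟩
    rw [hne] at this
    exact absurd this (Finset.notMem_empty x)
  obtain ⟨hXK, k, Y, h0, hk, hmem, hstep⟩ := hX
  have hUC : UnionClosed (AFam R) := checkFam_unionClosed (KFam_unionClosed R)
  have key : ∀ i ≤ k, q ∉ Y i := by
    intro i
    induction i with
    | zero => intro _; rw [h0]; exact Finset.notMem_empty q
    | succ n ih =>
      intro hn hqY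
      have hn' : n < k := hn
      have hqn : q ∉ Y n := ih (le_of_lt hn')
      obtain ⟨t, htn, heq⟩ := aux_step_insert (hstep n hn').1 (hstep n hn').2
      have htq : t = q := by
        rw [heq] at hqY
        rcases Finset.mem_insert.mp hqY with h | h
        · exact h.symm
        · exact absurd h hqn
      subst htq
      have hYnF : Y n ∈ AFam R := checkFam_of_prefix h0 hmem hstep n (le_of_lt hn')
      have hYn1F : Y (n + 1) ∈ AFam R := checkFam_of_prefix h0 hmem hstep (n + 1) hn
      have hYnsub : Y n ⊆ Finset.univ \ insert t A := by
        intro x hx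
        rw [Finset.mem_sdiff, Finset.mem_insert]
        refine ⟨Finset.mem_univ x, ?_⟩
        rintro (h | h)
        · exact hqn (h ▸ hx)
        · have : x ∈ X := (hk ▸ path_mono hstep n k (le_of_lt hn') le_rfl) hx
          exact hXA x this h
      have hYnX₀ : Y n ⊆ X₀ := hX₀max (Y n) hYnF hYnsub
      have : X₀ ∪ Y (n + 1) = insert t X₀ := by
        rw [heq]
        ext x
        simp only [Finset.mem_union, Finset.mem_insert]
        constructor
        · rintro (hx | hx | hx)
          · exact Or.inr hx
          · exact Or.inl hx
          · exact Or.inr (hYnX₀ hx)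
        · rintro (hx | hx)
          · exact Or.inr (Or.inl hx)
          · exact Or.inl hx
      exact hqX₀ (this ▸ hUC X₀ hX₀F (Y (n + 1)) hYn1F)
  exact key k le_rfl (hk ▸ hqmem)

theorem stmt15 (R : Set (Finset α × α)) :
    AFam {r : Finset α × α | CriticalRule R r.1 r.2} = AFam R := by
  apply Set.eq_of_subset_of_subset
  · -- ⊆ : reachable in the critical family implies reachable in the original
    intro X hX
    obtain ⟨hXK, k, Y, h0, hk, hmem, hstep⟩ := hX
    suffices h : ∀ i ≤ k, Y i ∈ AFam R by
      have := h k le_rfl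
      rwa [hk] at this
    intro i
    induction i with
    | zero => intro _; rw [h0]; exact empty_mem_checkFam (empty_mem_KFam R)
    | succ n ih =>
      intro hn
      have hn' : n < k := hn
      have hYn : Y n ∈ AFam R := ih (le_of_lt hn')
      obtain ⟨t, htn, heq⟩ := aux_step_insert (hstep n hn').1 (hstep n hn').2
      rw [heq]
      by_contra hcon
      obtain ⟨A, hcrit, hdisj⟩ := exists_critical_rule R hYn hcon
      have hrule : (⟨A, t⟩ : Finset α × α) ∈
          {r : Finset α × α | CriticalRule R r.1 r.2} := hcrit
      have hacc := hmem (n + 1) hn ⟨A, t⟩ hrule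
      have h1 : t ∈ Y (n + 1) := heq ▸ Finset.mem_insert_self t (Y n)
      obtain ⟨s, hs⟩ := hacc h1
      rw [Finset.mem_inter] at hs
      exact hdisj s (heq ▸ hs.1) hs.2
  · -- ⊇ : reachable in the original family implies reachable in the critical family
    intro X hX
    have hsub := AFam_subset_KFam_critical R
    obtain ⟨hXK, k, Y, h0, hk, hmem, hstep⟩ := hX
    refine ⟨hsub ⟨hXK, k, Y, h0, hk, hmem, hstep⟩, k, Y, h0, hk, ?_, hstep⟩
    intro i hi
    exact hsub (checkFam_of_prefix h0 hmem hstep i hi)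
end
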